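/- arXiv:2407.10571 — 4 statements merged into one kernel-verified Lean document; each statement's English description precedes it below -/
import Mathlib

section
/- For any graph G, spi(G) equals the least integer ℓ such that the graph G ⊗ (ℓ−1), obtained from G by adding ℓ−1 new vertices each adjacent to all vertices of G, has a spanning spider whose center belongs to V(G). -/
open SimpleGraph

variable {V : Type*}

/-- `T` is a spanning tree of `G`. -/
def IsSpanningTree (G T : SimpleGraph V) : Prop := T ≤ G ∧ T.IsTree

/-- The set of branch vertices (degree at least 3) of a graph/tree `T`. -/
def branchSet (T : SimpleGraph V) : Set V := {v | 3 ≤ (T.neighborSet v).ncard}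

/-- `b(G)`: minimum number of branch vertices over all spanning trees of `G`. -/
noncomputable def bNum (G : SimpleGraph V) : ℕ :=
  sInf {k | ∃ T : SimpleGraph V, IsSpanningTree G T ∧ (branchSet T).ncard = k}

/-- A subgraph which is a path: connected, acyclic, all degrees at most 2. -/
def IsPathSub {G : SimpleGraph V} (S : G.Subgraph) : Prop :=
  S.Connected ∧ S.coe.IsAcyclic ∧ ∀ v, (S.neighborSet v).ncard ≤ 2

/-- A subgraph which is a spider with center `c`: connected, acyclic, and every
vertex of degree at least 3 equals `c`. -/
def IsSpiderSub {G : SimpleGraph V} (S : G.Subgraph) (c : V) : Prop :=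
  S.Connected ∧ S.coe.IsAcyclic ∧ c ∈ S.verts ∧
    ∀ v, 3 ≤ (S.neighborSet v).ncard → v = c

/-- `G` has a partition of its vertex set into `p` vertex-disjoint paths. -/
def HasPathPartition (G : SimpleGraph V) (p : ℕ) : Prop :=
  ∃ F : Fin p → G.Subgraph, (∀ i, IsPathSub (F i)) ∧ ∀ v, ∃! i, v ∈ (F i).verts

/-- `G` has a path-spider cover with `p` parts: one spider with center `c`
and `p - 1` vertex-disjoint paths, partitioning `V(G)`. -/
def HasPathSpiderCoverC (G : SimpleGraph V) (p : ℕ) (c : V) : Prop :=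
  ∃ (hp : 0 < p) (F : Fin p → G.Subgraph),
    IsSpiderSub (F ⟨0, hp⟩) c ∧ (∀ i, i ≠ ⟨0, hp⟩ → IsPathSub (F i)) ∧
    ∀ v, ∃! i, v ∈ (F i).verts

/-- `ham(G)`: least number of paths in a partition of `G` into paths. -/
noncomputable def hamNum (G : SimpleGraph V) : ℕ := sInf {p | HasPathPartition G p}

/-- `spi(G)`: least `p` such that `G` has a path-spider cover with one spider
and `p - 1` paths. -/
noncomputable def spiNum (G : SimpleGraph V) : ℕ :=
  sInf {p | ∃ c, HasPathSpiderCoverC G p c}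

/-- `G ⊗ k`: the graph obtained from `G` by adding `k` new pairwise non-adjacent
vertices, each adjacent to every vertex of `G`. -/
def addUniversal (G : SimpleGraph V) (k : ℕ) : SimpleGraph (V ⊕ Fin k) :=
  SimpleGraph.fromRel (fun x y => match x, y with
    | Sum.inl u, Sum.inl v => G.Adj u v
    | Sum.inl _, Sum.inr _ => True
    | _, _ => False)

/-- The branch cost of a tree `T`: the sum of the weights of its branch vertices. -/
noncomputable def treeCost (T : SimpleGraph V) (w : V → ℕ) : ℕ :=
  ∑ᶠ v ∈ branchSet T, w v

/-!
A cover of `G` by a spider centred at `c` and paths `P₁, …, P_k` becomes a spanning tree of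
`G ⊗ k` by joining the `j`-th new vertex to `c` and to an end of `P_j`: in the resulting connected
graph every vertex other than `c` has degree at most two, so any of its spanning trees is a spider
centred at `c`. Conversely, deleting the new vertices from a spanning spider of `G ⊗ k` centred at
`c ∈ V(G)` leaves a forest on `V(G)` whose components are a spider centred at `c` and paths. Every
component avoiding `c` hangs, at its vertex nearest to `c`, off a new vertex, and a new vertex has
degree at most two, so it carries at most one of them: there are at most `k + 1` components.
-/

namespace SimpleGraph

lemma Reachable.exists_adj_dist_add_one {H : SimpleGraph V} {x r : V} (h : H.Reachable x r)
    (hne : x ≠ r) : ∃ z, H.Adj x z ∧ H.dist z r + 1 = H.dist x r := by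
  obtain ⟨p, hp⟩ := h.exists_walk_length_eq_dist
  cases p with
  | nil => exact absurd rfl hne
  | cons hadj q =>
    obtain ⟨q', hq'⟩ := q.reachable.exists_walk_length_eq_dist
    have h₁ := dist_le q
    have h₂ := dist_le (Walk.cons hadj q')
    simp only [Walk.length_cons] at hp h₂
    exact ⟨_, hadj, by omega⟩

lemma Subgraph.exists_ncard_neighborSet_le_one [Finite V] {H : SimpleGraph V} {S : H.Subgraph}
    (hc : S.Connected) (ha : S.coe.IsAcyclic) :
    ∃ v ∈ S.verts, (S.neighborSet v).ncard ≤ 1 := by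
  classical
  rcases S.verts.subsingleton_or_nontrivial with hs | hnt
  · obtain ⟨v, hv⟩ := hc.nonempty
    refine ⟨v, hv, ?_⟩
    have hempty : S.neighborSet v = ∅ :=
      Set.eq_empty_of_forall_notMem fun w hw => (S.adj_sub hw).ne (hs hv hw.snd_mem)
    simp [hempty]
  · have : Nontrivial S.verts := hnt.coe_sort
    have := Fintype.ofFinite S.verts
    obtain ⟨v, hv⟩ := (IsTree.mk hc.coe ha).exists_vert_degree_one_of_nontrivial
    refine ⟨v, v.2, le_of_eq ?_⟩
    rw [Subgraph.coe_degree, ← Subgraph.finset_card_neighborSet_eq_degree] at hv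
    rw [Set.ncard_eq_toFinset_card', hv]

lemma Subgraph.Connected.reachable_spanningCoe {G : SimpleGraph V} {S : G.Subgraph}
    (hS : S.Connected) {u v : V} (hu : u ∈ S.verts) (hv : v ∈ S.verts) :
    S.spanningCoe.Reachable u v :=
  (hS.coe ⟨u, hu⟩ ⟨v, hv⟩).map ⟨Subtype.val, id⟩

lemma Connected.exists_mem_supp_adj_inr_dist_eq {α β : Type*} {T : SimpleGraph (α ⊕ β)}
    (hT : T.Connected) {a : α} {C : (T.comap Sum.inl).ConnectedComponent}
    (hC : C ≠ (T.comap Sum.inl).connectedComponentMk a) :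
    ∃ v ∈ C.supp, ∃ b, T.Adj (.inl v) (.inr b) ∧
      T.dist (.inl v) (.inl a) = T.dist (.inr b) (.inl a) + 1 := by
  let d : α → ℕ := fun v => T.dist (.inl v) (.inl a)
  obtain ⟨v, hvC, hmin⟩ : ∃ v ∈ C.supp, ∀ u ∈ C.supp, d v ≤ d u :=
    ⟨_, Function.argminOn_mem d _ C.nonempty_supp, fun u hu => Function.argminOn_le d _ hu⟩
  have hva : (.inl v : α ⊕ β) ≠ .inl a := by
    intro h
    obtain rfl : v = a := Sum.inl_injective h
    exact hC ((C.mem_supp_iff v).mp hvC).symm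
  obtain ⟨z, hz, hzd⟩ := (hT _ _).exists_adj_dist_add_one hva
  cases z with
  | inl u =>
    have huC : u ∈ C.supp := by
      rw [C.mem_supp_iff] at hvC ⊢
      exact (ConnectedComponent.connectedComponentMk_eq_of_adj (G := T.comap Sum.inl) hz).symm
        |>.trans hvC
    have : d v ≤ d u := hmin u huC
    simp only [d] at this
    omega
  | inr b => exact ⟨v, hvC, b, hz, hzd.symm⟩

theorem IsTree.card_connectedComponent_comap_inl_le {α β : Type*} [Finite α] [Finite β]
    {T : SimpleGraph (α ⊕ β)} (hT : T.IsTree) (hdeg : ∀ b, (T.neighborSet (.inr b)).ncard ≤ 2) :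
    Nat.card (T.comap Sum.inl).ConnectedComponent ≤ Nat.card β + 1 := by
  classical
  rcases isEmpty_or_nonempty α with hα | ⟨⟨a⟩⟩
  · simp
  set C₀ := (T.comap Sum.inl).connectedComponentMk a
  choose v hv b hadj hdist using fun C (hC : C ≠ C₀) =>
    hT.connected.exists_mem_supp_adj_inr_dist_eq hC
  -- two components hanging off the same `b`, together with the step from `b` towards `a`,
  -- would give `b` three neighbours
  have hinj : ∀ C₁ h₁ C₂ h₂, b C₁ h₁ = b C₂ h₂ → C₁ = C₂ := by
    intro C₁ h₁ C₂ h₂ hb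
    by_contra hne
    have hv₁₂ : v C₁ h₁ ≠ v C₂ h₂ := fun he => hne <|
      ((C₁.mem_supp_iff _).mp (hv C₁ h₁)).symm.trans (he ▸ (C₂.mem_supp_iff _).mp (hv C₂ h₂))
    obtain ⟨z, hz, hzd⟩ := (hT.connected _ _).exists_adj_dist_add_one
      (x := .inr (b C₁ h₁)) (r := .inl a) (by simp)
    have hd₁ := hdist C₁ h₁
    have hd₂ := hdist C₂ h₂
    rw [← hb] at hd₂
    have hz₁ : z ≠ .inl (v C₁ h₁) := by rintro rfl; omega
    have hz₂ : z ≠ .inl (v C₂ h₂) := by rintro rfl; omega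
    have h3 : 2 < (T.neighborSet (.inr (b C₁ h₁))).ncard := by
      rw [Set.two_lt_ncard]
      exact ⟨_, (hadj C₁ h₁).symm, _, hb ▸ (hadj C₂ h₂).symm, z, hz, by simpa using hv₁₂,
        hz₁.symm, hz₂.symm⟩
    exact (hdeg _).not_gt h3
  let f : (T.comap Sum.inl).ConnectedComponent → Option β := fun C =>
    if h : C = C₀ then none else some (b C h)
  have hf : f.Injective := by
    intro C₁ C₂ he
    by_cases h₁ : C₁ = C₀ <;> by_cases h₂ : C₂ = C₀ <;> simp [f, h₁, h₂] at he
    · rw [h₁, h₂]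
    · exact hinj C₁ h₁ C₂ h₂ he
  calc _ ≤ Nat.card (Option β) := Nat.card_le_card_of_injective f hf
    _ = Nat.card β + 1 := Finite.card_option

variable {β : Type*}

def addLinks (H : SimpleGraph V) (c : V) (e : β → V) : SimpleGraph (V ⊕ β) where
  Adj
    | .inl u, .inl v => H.Adj u v
    | .inl u, .inr b | .inr b, .inl u => u = c ∨ u = e b
    | .inr _, .inr _ => False
  symm := ⟨by rintro (u | b) (v | b') h <;> first | exact h | exact H.adj_symm h⟩
  loopless := ⟨by rintro (u | b) h <;> first | exact H.loopless.irrefl u h | exact h⟩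

variable {H : SimpleGraph V} {c : V} {e : β → V}

lemma Reachable.inl_addLinks {u v : V} (h : H.Reachable u v) :
    (H.addLinks c e).Reachable (.inl u) (.inl v) :=
  h.map ⟨Sum.inl, id⟩

lemma addLinks_connected (h : ∀ u, H.Reachable u c ∨ ∃ b, H.Reachable u (e b)) :
    (H.addLinks c e).Connected := by
  rw [connected_iff_exists_forall_reachable]
  refine ⟨.inl c, fun x => Reachable.symm ?_⟩
  have hc : ∀ b, (H.addLinks c e).Reachable (.inr b) (.inl c) := fun b =>
    Adj.reachable (Or.inl rfl)
  rcases x with u | b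
  · rcases h u with hu | ⟨b, hu⟩
    · exact hu.inl_addLinks
    · exact hu.inl_addLinks.trans ((Adj.reachable (Or.inr rfl)).symm.trans (hc b))
  · exact hc b

lemma ncard_neighborSet_addLinks_inr_le (b : β) :
    ((H.addLinks c e).neighborSet (.inr b)).ncard ≤ 2 := by
  have hsub : (H.addLinks c e).neighborSet (.inr b) ⊆ {.inl c, .inl (e b)} := by
    rintro (u | b') h
    · rcases h with rfl | rfl <;> simp
    · exact h.elim
  exact (Set.ncard_le_ncard hsub (Set.toFinite _)).trans
    ((Set.ncard_insert_le _ _).trans (by simp))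

lemma ncard_neighborSet_addLinks_inl_le [Finite V] [Finite β] {u : V} (hu : u ≠ c) :
    ((H.addLinks c e).neighborSet (.inl u)).ncard ≤
      (H.neighborSet u).ncard + {b | e b = u}.ncard := by
  have hsub : (H.addLinks c e).neighborSet (.inl u) ⊆
      Sum.inl '' H.neighborSet u ∪ Sum.inr '' {b | e b = u} := by
    rintro (v | b) h
    · exact .inl ⟨v, h, rfl⟩
    · exact .inr ⟨b, (h.resolve_left hu).symm, rfl⟩
  calc _ ≤ (Sum.inl '' H.neighborSet u ∪ Sum.inr '' {b | e b = u}).ncard :=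
        Set.ncard_le_ncard hsub (Set.toFinite _)
    _ ≤ (Sum.inl '' H.neighborSet u).ncard + (Sum.inr '' {b | e b = u}).ncard :=
        Set.ncard_union_le _ _
    _ = _ := by
        rw [Set.ncard_image_of_injective _ Sum.inl_injective,
          Set.ncard_image_of_injective _ Sum.inr_injective]

end SimpleGraph

lemma addUniversal_adj_inl {G : SimpleGraph V} {k : ℕ} {u v : V} :
    (addUniversal G k).Adj (.inl u) (.inl v) ↔ G.Adj u v := by
  simp only [addUniversal, fromRel_adj, ne_eq, Sum.inl.injEq]
  exact ⟨fun ⟨_, h⟩ => h.elim id G.adj_symm, fun h => ⟨h.ne, .inl h⟩⟩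

lemma addLinks_le_addUniversal {G H : SimpleGraph V} {k : ℕ} {c : V} {e : Fin k → V}
    (hle : H ≤ G) : H.addLinks c e ≤ addUniversal G k := by
  rintro (u | b) (v | b') h
  · exact addUniversal_adj_inl.mpr (hle h)
  · simp [addUniversal]
  · simp [addUniversal]
  · exact h.elim

theorem hasPathSpiderCoverC_of_isAcyclic [Finite V] {G H : SimpleGraph V} (hle : H ≤ G)
    (hH : H.IsAcyclic) {c : V} (hbranch : ∀ v, 3 ≤ (H.neighborSet v).ncard → v = c) :
    HasPathSpiderCoverC G (Nat.card H.ConnectedComponent) c := by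
  set C₀ := H.connectedComponentMk c
  have : Nonempty H.ConnectedComponent := ⟨C₀⟩
  have hp : 0 < Nat.card H.ConnectedComponent := Nat.card_pos
  set e₀ := (Finite.equivFin H.ConnectedComponent).symm
  set e := (Equiv.swap ⟨0, hp⟩ (e₀.symm C₀)).trans e₀
  have he : e ⟨0, hp⟩ = C₀ := by simp [e]
  set F : H.ConnectedComponent → G.Subgraph := fun C =>
    (SimpleGraph.toSubgraph H hle).induce C.supp
  have hconn : ∀ C, (F C).Connected := fun C => ⟨C.connected_toSubgraph.coe⟩
  have hacyc : ∀ C, (F C).coe.IsAcyclic := fun C => hH.subgraph C.toSubgraph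
  have hdeg : ∀ C v, ((F C).neighborSet v).ncard ≤ (H.neighborSet v).ncard := fun C v =>
    Set.ncard_le_ncard (fun w hw => hw.2.2) (Set.toFinite _)
  refine ⟨hp, fun i => F (e i), ⟨hconn _, hacyc _, ?_, ?_⟩,
    fun i hi => ⟨hconn _, hacyc _, ?_⟩, ?_⟩
  · change c ∈ (F (e ⟨0, hp⟩)).verts
    rw [he]
    exact ConnectedComponent.connectedComponentMk_mem
  · exact fun v hv => hbranch v (hv.trans (hdeg _ v))
  · intro v
    by_contra! h3
    have hvc := hbranch v ((Nat.succ_le_of_lt h3).trans (hdeg _ v))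
    obtain ⟨w, hw⟩ := Set.nonempty_of_ncard_ne_zero (s := (F (e i)).neighborSet v) (by omega)
    have hv : e i = e ⟨0, hp⟩ := by rw [he, ← ((e i).mem_supp_iff v).mp hw.1, hvc]
    exact hi (e.injective hv)
  · intro v
    refine ⟨e.symm (H.connectedComponentMk v), by simp [F], fun i hi => ?_⟩
    rw [Equiv.eq_symm_apply]
    exact ((e i).mem_supp_iff v).mp hi |>.symm

theorem exists_hasPathSpiderCoverC_of_isSpanningTree [Finite V] {G : SimpleGraph V} {k : ℕ}
    {c : V} {T : SimpleGraph (V ⊕ Fin k)} (hT : IsSpanningTree (addUniversal G k) T)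
    (hb : branchSet T ⊆ {.inl c}) : ∃ p ≤ k + 1, HasPathSpiderCoverC G p c := by
  have hdeg : ∀ x, x ≠ .inl c → (T.neighborSet x).ncard ≤ 2 := fun x hx => by
    by_contra! h
    exact hx (hb h)
  refine ⟨_, ?_, hasPathSpiderCoverC_of_isAcyclic (H := T.comap Sum.inl) ?_ ?_ ?_⟩
  · simpa using hT.2.card_connectedComponent_comap_inl_le fun b => hdeg _ (by simp)
  · exact fun u v h => addUniversal_adj_inl.mp (hT.1 h)
  · exact hT.2.isAcyclic.comap ⟨Sum.inl, id⟩ Sum.inl_injective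
  · intro v hv
    have h3 : 3 ≤ (T.neighborSet (.inl v)).ncard :=
      hv.trans (Set.ncard_le_ncard_of_injOn Sum.inl (fun _ hw => hw) Sum.inl_injective.injOn)
    simpa using hb h3

theorem exists_isSpanningTree_of_addLinks [Finite V] {G H : SimpleGraph V} {k : ℕ} {c : V}
    {e : Fin k → V} (hle : H ≤ G) (hreach : ∀ u, H.Reachable u c ∨ ∃ b, H.Reachable u (e b))
    (hdeg : ∀ u, u ≠ c → (H.neighborSet u).ncard + {b | e b = u}.ncard ≤ 2) :
    ∃ T : SimpleGraph (V ⊕ Fin k),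
      IsSpanningTree (addUniversal G k) T ∧ branchSet T ⊆ {.inl c} := by
  obtain ⟨T, hTK, hT⟩ := (addLinks_connected hreach).exists_isTree_le
  refine ⟨T, ⟨hTK.trans (addLinks_le_addUniversal hle), hT⟩, fun x hx => ?_⟩
  by_contra hxc
  have hK : ((H.addLinks c e).neighborSet x).ncard ≤ 2 := by
    rcases x with u | b
    · have hu : u ≠ c := fun h => hxc (by simp [h])
      exact (ncard_neighborSet_addLinks_inl_le hu).trans (hdeg u hu)
    · exact ncard_neighborSet_addLinks_inr_le b
  have hTK' : (T.neighborSet x).ncard ≤ ((H.addLinks c e).neighborSet x).ncard :=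
    Set.ncard_le_ncard fun y hy => hTK hy
  have h3 : 3 ≤ (T.neighborSet x).ncard := hx
  omega

theorem HasPathSpiderCoverC.exists_le_with_path_ends [Finite V] {G : SimpleGraph V} {p : ℕ}
    {c : V} (h : HasPathSpiderCoverC G p c) :
    ∃ H ≤ G, ∃ e : Fin (p - 1) → V, (∀ u, H.Reachable u c ∨ ∃ b, H.Reachable u (e b)) ∧
      ∀ u, u ≠ c → (H.neighborSet u).ncard + {b | e b = u}.ncard ≤ 2 := by
  obtain ⟨hp, F, hspider, hpaths, hpart⟩ := h
  set i₀ : Fin p := ⟨0, hp⟩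
  let path (b : Fin (p - 1)) : Fin p := ⟨b + 1, by omega⟩
  have hpath : ∀ b, path b ≠ i₀ := fun b => by simp [path, i₀, Fin.ext_iff]
  have hpath_inj : path.Injective := fun b b' h => by simpa [path, Fin.ext_iff] using h
  choose e he hleaf using fun b =>
    Subgraph.exists_ncard_neighborSet_le_one (hpaths _ (hpath b)).1 (hpaths _ (hpath b)).2.1
  have huniq : ∀ {v i j}, v ∈ (F i).verts → v ∈ (F j).verts → i = j := fun hi hj =>
    (hpart _).unique hi hj
  set H := ⨆ i, (F i).spanningCoe
  have hnbr : ∀ {i v}, v ∈ (F i).verts → H.neighborSet v = (F i).neighborSet v := by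
    intro i v hv
    ext w
    simp only [H, mem_neighborSet, iSup_adj, Subgraph.spanningCoe_adj]
    exact ⟨fun ⟨j, hj⟩ => huniq hj.fst_mem hv ▸ hj, fun h => ⟨i, h⟩⟩
  refine ⟨H, iSup_le fun i => (F i).spanningCoe_le, e, fun u => ?_, fun u hu => ?_⟩
  · obtain ⟨i, hu, -⟩ := hpart u
    have hmono := le_iSup (fun i => (F i).spanningCoe) i
    by_cases hi : i = i₀
    · subst hi
      exact .inl ((hspider.1.reachable_spanningCoe hu hspider.2.2.1).mono hmono)
    · obtain ⟨b, rfl⟩ : ∃ b, path b = i :=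
        ⟨⟨i - 1, by omega⟩, by simp [path, i₀, Fin.ext_iff] at hi ⊢; omega⟩
      exact .inr ⟨b, ((hpaths _ hi).1.reachable_spanningCoe hu (he b)).mono hmono⟩
  · obtain ⟨i, hui, -⟩ := hpart u
    rw [hnbr hui]
    by_cases hend : ∃ b, e b = u
    · obtain ⟨b, rfl⟩ := hend
      obtain rfl := huniq (he b) hui
      have hone : {b' | e b' = e b}.ncard ≤ 1 := (Set.ncard_le_one (Set.toFinite _)).mpr
        fun b₁ h₁ b₂ h₂ => hpath_inj (huniq (h₁ ▸ he b₁) (h₂ ▸ he b₂))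
      have := hleaf b
      omega
    · have hempty : {b | e b = u} = ∅ := Set.eq_empty_of_forall_notMem fun b hb => hend ⟨b, hb⟩
      rw [hempty, Set.ncard_empty, add_zero]
      by_cases hi : i = i₀
      · subst hi
        by_contra! h3
        exact hu (hspider.2.2.2 u h3)
      · exact (hpaths i hi).2.2 u

theorem stmt4 {V : Type*} [Fintype V] (G : SimpleGraph V) :
    spiNum G = sInf {ℓ | 1 ≤ ℓ ∧ ∃ (c : V) (T : SimpleGraph (V ⊕ Fin (ℓ - 1))),
      IsSpanningTree (addUniversal G (ℓ - 1)) T ∧ branchSet T ⊆ {Sum.inl c}} := by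
  refine csInf_eq_csInf_of_forall_exists_le ?_ ?_
  · rintro p ⟨c, hc⟩
    obtain ⟨H, hHG, e, hreach, hdeg⟩ := hc.exists_le_with_path_ends
    obtain ⟨T, hT, hb⟩ := exists_isSpanningTree_of_addLinks hHG hreach hdeg
    exact ⟨p, ⟨hc.1, c, T, hT, hb⟩, le_rfl⟩
  · rintro ℓ ⟨hℓ, c, T, hT, hb⟩
    obtain ⟨p, hpℓ, hc⟩ := exists_hasPathSpiderCoverC_of_isSpanningTree hT hb
    exact ⟨p, ⟨c, hc⟩, by omega⟩
end

section
/- If V_i is a set of vertices inducing an independent set in a graph G, such that all vertices of V_i have the same neighborhood outside V_i, and T is a spanning tree of G in which some vertex v ∈ V_i is a branch vertex while u ∈ V_i is not, then there exists a spanning tree T' of G whose set of branch vertices is (B(T) \ {v}) ∪ {u}. -/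
/-! Two vertices of `V_i` are non-adjacent twins (`N(u) = N(v)`), so the transposition of `u` and
`v` is an automorphism of `G`. Transporting `T` along it gives a spanning tree `T'` in which
`u` plays the role of `v` and vice versa, so `B(T') = (B(T) \ {v}) ∪ {u}`. -/

open SimpleGraph

variable {V : Type*}

namespace SimpleGraph

variable {V W : Type*} {G : SimpleGraph V}

def Iso.swapOfNeighborSetEq [DecidableEq V] {u v : V} (h : G.neighborSet u = G.neighborSet v) :
    G ≃g G where
  toEquiv := Equiv.swap u v
  map_rel_iff' {x y} := by
    have hadj : ∀ w, G.Adj u w ↔ G.Adj v w := fun w => Set.ext_iff.mp h w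
    -- `u` and `v` are non-adjacent, since `G.Adj u v` would give the loop `G.Adj v v`
    simp only [Equiv.swap_apply_def]
    split_ifs <;> subst_vars <;> grind [G.adj_comm]

theorem Iso.preimage_branchSet {H : SimpleGraph W} (e : G ≃g H) :
    e ⁻¹' branchSet H = branchSet G := by
  ext x
  simp only [branchSet, Set.mem_preimage, Set.mem_ofPred_eq, ← e.image_neighborSet,
    Set.ncard_image_of_injective _ e.injective]

end SimpleGraph

theorem IsSpanningTree.comap_iso {G T : SimpleGraph V} (hT : IsSpanningTree G T) (φ : G ≃g G) :
    IsSpanningTree G (T.comap φ) :=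
  ⟨fun _ _ h => φ.map_adj_iff.mp (hT.1 h), (Iso.comap φ.toEquiv T).isTree_iff.mpr hT.2⟩

theorem Equiv.swap_preimage_eq_of_mem_of_notMem {α : Type*} [DecidableEq α] {s : Set α}
    {u v : α} (hv : v ∈ s) (hu : u ∉ s) : Equiv.swap u v ⁻¹' s = (s \ {v}) ∪ {u} := by
  ext x
  simp only [Set.mem_preimage, Equiv.swap_apply_def, Set.mem_union, Set.mem_sdiff,
    Set.mem_singleton_iff]
  split_ifs <;> grind

theorem stmt8_general {V : Type*} (G : SimpleGraph V) (Vi : Set V)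
    (hind : ∀ u ∈ Vi, ∀ v ∈ Vi, ¬G.Adj u v)
    (hnbr : ∀ u ∈ Vi, ∀ v ∈ Vi, ∀ x ∉ Vi, (G.Adj u x ↔ G.Adj v x))
    (T : SimpleGraph V) (hT : IsSpanningTree G T)
    (u v : V) (hu : u ∈ Vi) (hv : v ∈ Vi)
    (hvb : v ∈ branchSet T) (hub : u ∉ branchSet T) :
    ∃ T' : SimpleGraph V, IsSpanningTree G T' ∧
      branchSet T' = (branchSet T \ {v}) ∪ {u} := by
  classical
  have htwins : G.neighborSet u = G.neighborSet v := by
    ext x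
    by_cases hx : x ∈ Vi
    · exact iff_of_false (hind u hu x hx) (hind v hv x hx)
    · exact hnbr u hu v hv x hx
  refine ⟨T.comap (Equiv.swap u v), hT.comap_iso (Iso.swapOfNeighborSetEq htwins), ?_⟩
  rw [← (Iso.comap (Equiv.swap u v) T).preimage_branchSet]
  exact Equiv.swap_preimage_eq_of_mem_of_notMem hvb hub

theorem stmt8 {V : Type*} [Fintype V] (G : SimpleGraph V) (Vi : Set V)
    (hind : ∀ u ∈ Vi, ∀ v ∈ Vi, ¬G.Adj u v)
    (hnbr : ∀ u ∈ Vi, ∀ v ∈ Vi, ∀ x ∉ Vi, (G.Adj u x ↔ G.Adj v x))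
    (T : SimpleGraph V) (hT : IsSpanningTree G T)
    (u v : V) (hu : u ∈ Vi) (hv : v ∈ Vi)
    (hvb : v ∈ branchSet T) (hub : u ∉ branchSet T) :
    ∃ T' : SimpleGraph V, IsSpanningTree G T' ∧
      branchSet T' = (branchSet T \ {v}) ∪ {u} :=
  stmt8_general G Vi hind hnbr T hT u v hu hv hvb hub
end

section
/- Let V_i induce a clique in a connected graph G such that all vertices of V_i have the same neighborhood outside V_i, and let T be a spanning tree of G containing at least two branch vertices in V_i. Then there exists a spanning tree T' of G with strictly fewer branch vertices in V_i and no more branch vertices in total. -/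
open SimpleGraph

variable {V : Type*}

/-
Pick two branch vertices `u ≠ v` of `T` in `V_i` and let `x` be the neighbour of `u` on the
`T`-path from `u` to `v`. Redirect every `T`-edge `ub` with `b ≠ x` to `vb`: these are edges of
`G`, since `u` and `v` are adjacent twins. The new graph is still connected (`u` reaches `v`
through `x`, along a path avoiding `u`) and has no more edges than `T`, so it is a spanning tree.
Now `u` is a leaf, `v` was already a branch vertex, and no other vertex gains degree.
-/

namespace Function

variable [DecidableEq V] {u v : V}

lemma update_id_ne_self (huv : u ≠ v) (c : V) : update id u v c ≠ u := by
  by_cases hc : c = u <;> simp [hc, huv.symm]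

lemma update_id_eq_iff {w : V} (hwu : w ≠ u) (hwv : w ≠ v) (c : V) :
    update id u v c = w ↔ c = w := by
  by_cases hc : c = u
  · simp [hc, hwu.symm, hwv.symm]
  · simp [hc]

end Function

namespace SimpleGraph

lemma Connected.of_adj_reachable {G H : SimpleGraph V} (hG : G.Connected)
    (h : ∀ a b, G.Adj a b → H.Reachable a b) : H.Connected := by
  have := hG.nonempty
  refine ⟨fun a b => ?_⟩
  simp only [reachable_iff_reflTransGen] at h ⊢
  exact Relation.ReflTransGen.lift' id h _ _ ((reachable_iff_reflTransGen a b).mp (hG a b))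

lemma ncard_incidenceSet (G : SimpleGraph V) (w : V) :
    (G.incidenceSet w).ncard = (G.neighborSet w).ncard := by
  classical exact Nat.card_congr (G.incidenceSetEquivNeighborSet w)

section Reattach

variable [DecidableEq V]

/-- Keep the edge `ux` and redirect every other edge at `u` to `v`; an edge `uv` would become
the loop `vv`, which `fromEdgeSet` discards. -/
def reattach (T : SimpleGraph V) (u v x : V) : SimpleGraph V :=
  fromEdgeSet (Sym2.map (Function.update id u v) '' (T.edgeSet \ {s(u, x)}) ∪ {s(u, x)})

variable {T : SimpleGraph V} {u v x : V}

lemma adj_update_of_adj {G : SimpleGraph V} (htwin : ∀ d, G.Adj u d → d ≠ v → G.Adj v d)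
    {c d : V} (hcd : G.Adj c d) (hne : Function.update id u v c ≠ Function.update id u v d) :
    G.Adj (Function.update id u v c) (Function.update id u v d) := by
  by_cases hc : c = u <;> by_cases hd : d = u
  · exact absurd (hc.trans hd.symm) hcd.ne
  · subst hc
    simp only [Function.update_self, Function.update_of_ne hd, id] at hne ⊢
    exact htwin d hcd hne.symm
  · subst hd
    simp only [Function.update_self, Function.update_of_ne hc, id] at hne ⊢
    exact (htwin c hcd.symm hne).symm
  · simpa [Function.update_of_ne hc, Function.update_of_ne hd] using hcd

lemma reattach_le {G : SimpleGraph V} (hTG : T ≤ G) (hux : T.Adj u x)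
    (htwin : ∀ d, G.Adj u d → d ≠ v → G.Adj v d) : T.reattach u v x ≤ G := by
  intro a b hab
  simp only [reattach, fromEdgeSet_adj, Set.mem_union, Set.mem_image, Set.mem_singleton_iff] at hab
  obtain ⟨⟨e, he, hea⟩ | hea, hne⟩ := hab
  · induction e using Sym2.ind with
    | h c d =>
      rw [Sym2.map_mk] at hea
      have hcd : G.Adj c d := hTG he.1
      rcases Sym2.eq_iff.mp hea with ⟨rfl, rfl⟩ | ⟨rfl, rfl⟩
      · exact adj_update_of_adj htwin hcd hne
      · exact (adj_update_of_adj htwin hcd hne.symm).symm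
  · rcases Sym2.eq_iff.mp hea with ⟨rfl, rfl⟩ | ⟨rfl, rfl⟩
    · exact hTG hux
    · exact (hTG hux).symm

lemma reattach_adj_self (hux : T.Adj u x) : (T.reattach u v x).Adj u x := by
  simp [reattach, hux.ne]

lemma reattach_adj_update {a b : V} (hab : T.Adj a b) (habux : s(a, b) ≠ s(u, x))
    (hne : Function.update id u v a ≠ Function.update id u v b) :
    (T.reattach u v x).Adj (Function.update id u v a) (Function.update id u v b) := by
  simp only [reattach, fromEdgeSet_adj, Set.mem_union, Set.mem_image, Set.mem_singleton_iff]
  exact ⟨Or.inl ⟨s(a, b), ⟨hab, habux⟩, Sym2.map_mk _ _ _⟩, hne⟩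

lemma reattach_adj_of_ne {a b : V} (hab : T.Adj a b) (hau : a ≠ u) (hbu : b ≠ u) :
    (T.reattach u v x).Adj a b := by
  have h := reattach_adj_update (u := u) (v := v) (x := x) hab (by simp [hau, hbu])
    (by simpa [hau, hbu] using hab.ne)
  simpa [hau, hbu] using h

lemma Walk.reachable_reattach {a b : V} (q : T.Walk a b) (hq : u ∉ q.support) :
    (T.reattach u v x).Reachable a b := by
  induction q with
  | nil => rfl
  | cons hac q ih =>
    rw [Walk.support_cons, List.mem_cons, not_or] at hq
    have hcu : _ ≠ u := fun h => hq.2 (h ▸ q.start_mem_support)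
    exact (reattach_adj_of_ne hac (Ne.symm hq.1) hcu).reachable.trans (ih hq.2)

lemma reattach_reachable_update (hux : T.Adj u x) (q : T.Walk x v) (hq : u ∉ q.support) (c : V) :
    (T.reattach u v x).Reachable c (Function.update id u v c) := by
  by_cases hc : c = u
  · subst hc
    simpa using (reattach_adj_self hux).reachable.trans (q.reachable_reattach hq)
  · simp [hc]

lemma reattach_connected (hT : T.Connected) (hux : T.Adj u x) (q : T.Walk x v)
    (hq : u ∉ q.support) : (T.reattach u v x).Connected := by
  refine hT.of_adj_reachable fun c d hcd => ?_
  have hc := reattach_reachable_update hux q hq c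
  have hd := reattach_reachable_update hux q hq d
  by_cases hux' : s(c, d) = s(u, x)
  · rcases Sym2.eq_iff.mp hux' with ⟨rfl, rfl⟩ | ⟨rfl, rfl⟩
    · exact (reattach_adj_self hux).reachable
    · exact (reattach_adj_self hux).reachable.symm
  by_cases hne : Function.update id u v c = Function.update id u v d
  · exact hc.trans (hne ▸ hd.symm)
  · exact hc.trans ((reattach_adj_update hcd hux' hne).reachable.trans hd.symm)

lemma ncard_edgeSet_reattach_le [Finite V] (hux : T.Adj u x) :
    (T.reattach u v x).edgeSet.ncard ≤ T.edgeSet.ncard :=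
  calc (T.reattach u v x).edgeSet.ncard
      ≤ (Sym2.map (Function.update id u v) '' (T.edgeSet \ {s(u, x)}) ∪ {s(u, x)}).ncard := by
        rw [reattach, edgeSet_fromEdgeSet]
        exact Set.ncard_le_ncard Set.sdiff_subset
    _ ≤ (Sym2.map (Function.update id u v) '' (T.edgeSet \ {s(u, x)})).ncard + 1 :=
        (Set.ncard_union_le _ _).trans_eq (by rw [Set.ncard_singleton])
    _ ≤ (T.edgeSet \ {s(u, x)}).ncard + 1 :=
        Nat.add_le_add_right (Set.ncard_image_le (Set.toFinite _)) 1
    _ = T.edgeSet.ncard := Set.ncard_sdiff_singleton_add_one hux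

lemma reattach_isTree [Finite V] (hT : T.IsTree) (hux : T.Adj u x) (q : T.Walk x v)
    (hq : u ∉ q.support) : (T.reattach u v x).IsTree := by
  have hconn := reattach_connected hT.connected hux q hq
  rw [isTree_iff_connected_and_card] at hT ⊢
  have := hconn.card_vert_le_card_edgeSet_add_one
  have := ncard_edgeSet_reattach_le (v := v) hux
  simp only [Nat.card_coe_set_eq] at *
  exact ⟨hconn, by omega⟩

lemma reattach_neighborSet_self_subset (huv : u ≠ v) :
    (T.reattach u v x).neighborSet u ⊆ {x} := by
  intro b hb
  simp only [mem_neighborSet, reattach, fromEdgeSet_adj, Set.mem_union, Set.mem_image,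
    Set.mem_singleton_iff] at hb
  obtain ⟨⟨e, -, he⟩ | he, -⟩ := hb
  · obtain ⟨c, -, hc⟩ := Sym2.mem_map.mp (he ▸ Sym2.mem_mk_left u b)
    exact absurd hc (Function.update_id_ne_self huv c)
  · exact Sym2.congr_right.mp he

lemma incidenceSet_reattach_subset (hux : T.Adj u x) {w : V} (hwu : w ≠ u) (hwv : w ≠ v) :
    (T.reattach u v x).incidenceSet w ⊆
      Sym2.map (Function.update id u v) '' (T.incidenceSet w \ {s(u, x)}) ∪
        T.incidenceSet w ∩ {s(u, x)} := by
  rintro e ⟨he, hwe⟩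
  rw [reattach, edgeSet_fromEdgeSet] at he
  obtain ⟨⟨e₀, ⟨he₀, hne⟩, rfl⟩ | rfl, -⟩ := he
  · obtain ⟨c, hc, hcw⟩ := Sym2.mem_map.mp hwe
    rw [Function.update_id_eq_iff hwu hwv] at hcw
    exact Or.inl ⟨e₀, ⟨⟨he₀, hcw ▸ hc⟩, hne⟩, rfl⟩
  · exact Or.inr ⟨⟨hux, hwe⟩, rfl⟩

lemma ncard_neighborSet_reattach_le [Finite V] (hux : T.Adj u x) {w : V} (hwu : w ≠ u)
    (hwv : w ≠ v) : ((T.reattach u v x).neighborSet w).ncard ≤ (T.neighborSet w).ncard := by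
  simp only [← ncard_incidenceSet]
  calc ((T.reattach u v x).incidenceSet w).ncard
      ≤ (Sym2.map (Function.update id u v) '' (T.incidenceSet w \ {s(u, x)}) ∪
          T.incidenceSet w ∩ {s(u, x)}).ncard :=
        Set.ncard_le_ncard (incidenceSet_reattach_subset hux hwu hwv)
    _ ≤ (Sym2.map (Function.update id u v) '' (T.incidenceSet w \ {s(u, x)})).ncard +
          (T.incidenceSet w ∩ {s(u, x)}).ncard := Set.ncard_union_le _ _
    _ ≤ (T.incidenceSet w \ {s(u, x)}).ncard + (T.incidenceSet w ∩ {s(u, x)}).ncard :=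
        Nat.add_le_add_right (Set.ncard_image_le (Set.toFinite _)) _
    _ = (T.incidenceSet w).ncard := by
        rw [add_comm, Set.ncard_inter_add_ncard_sdiff_eq_ncard]

lemma branchSet_reattach_subset [Finite V] (hux : T.Adj u x) (huv : u ≠ v)
    (hv : v ∈ branchSet T) : branchSet (T.reattach u v x) ⊆ branchSet T \ {u} := by
  intro w (hw : 3 ≤ _)
  have hwu : w ≠ u := by
    rintro rfl
    have := Set.ncard_le_ncard (reattach_neighborSet_self_subset (T := T) (x := x) huv)
    rw [Set.ncard_singleton] at this
    omega
  refine ⟨?_, hwu⟩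
  by_cases hwv : w = v
  · exact hwv ▸ hv
  · exact hw.trans (ncard_neighborSet_reattach_le hux hwu hwv)

end Reattach

end SimpleGraph

theorem stmt9_general {V : Type*} [Fintype V] (G : SimpleGraph V) (Vi : Set V)
    (hclq : ∀ u ∈ Vi, ∀ v ∈ Vi, u ≠ v → G.Adj u v)
    (hnbr : ∀ u ∈ Vi, ∀ v ∈ Vi, ∀ x ∉ Vi, (G.Adj u x ↔ G.Adj v x))
    (T : SimpleGraph V) (hT : IsSpanningTree G T)
    (h2 : 2 ≤ (branchSet T ∩ Vi).ncard) :
    ∃ T' : SimpleGraph V, IsSpanningTree G T' ∧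
      (branchSet T' ∩ Vi).ncard < (branchSet T ∩ Vi).ncard ∧
      (branchSet T').ncard ≤ (branchSet T).ncard := by
  classical
  obtain ⟨u, v, ⟨hu, huVi⟩, ⟨hv, hvVi⟩, huv⟩ :=
    (Set.one_lt_ncard_iff (Set.toFinite _)).mp h2
  have htwin : ∀ d, G.Adj u d → d ≠ v → G.Adj v d := fun d hud hdv => by
    by_cases hd : d ∈ Vi
    · exact hclq v hvVi d hd hdv.symm
    · exact (hnbr u huVi v hvVi d hd).mp hud
  obtain ⟨p, hp, -⟩ := hT.2.existsUnique_path u v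
  cases p with
  | nil => exact absurd rfl huv
  | cons hux q =>
    have hq := ((Walk.cons_isPath_iff hux q).mp hp).2
    have hsub := branchSet_reattach_subset hux huv hv
    refine ⟨T.reattach u v _, ⟨reattach_le hT.1 hux htwin, reattach_isTree hT.2 hux q hq⟩, ?_,
      Set.ncard_le_ncard (hsub.trans Set.sdiff_subset)⟩
    calc _ ≤ ((branchSet T ∩ Vi) \ {u}).ncard :=
          Set.ncard_le_ncard ((Set.inter_subset_inter_left Vi hsub).trans_eq
            (Set.sdiff_inter_right_comm _ _ _))
      _ < _ := Set.ncard_sdiff_singleton_lt_of_mem ⟨hu, huVi⟩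

theorem stmt9 {V : Type*} [Fintype V] (G : SimpleGraph V) (hG : G.Connected) (Vi : Set V)
    (hclq : ∀ u ∈ Vi, ∀ v ∈ Vi, u ≠ v → G.Adj u v)
    (hnbr : ∀ u ∈ Vi, ∀ v ∈ Vi, ∀ x ∉ Vi, (G.Adj u x ↔ G.Adj v x))
    (T : SimpleGraph V) (hT : IsSpanningTree G T)
    (h2 : 2 ≤ (branchSet T ∩ Vi).ncard) :
    ∃ T' : SimpleGraph V, IsSpanningTree G T' ∧
      (branchSet T' ∩ Vi).ncard < (branchSet T ∩ Vi).ncard ∧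
      (branchSet T').ncard ≤ (branchSet T).ncard :=
  stmt9_general G Vi hclq hnbr T hT h2
end

section
/- Let G = H(G_1,...,G_n) be a connected substitution graph and let T be a spanning tree of G with branch vertex set B satisfying |B ∩ V(G_i)| ≤ 1 for all i. Suppose each vertex of B ∩ V(G_i) has at most one fixed designated representative. For each i not containing a branch vertex, the edges of T with both endpoints in V(G_i) form a disjoint union of paths in G_i, and hence at least ham(G_i) vertices of V(G_i) have their T-parent (with respect to any rooting of T at a branch vertex) outside V(G_i). -/
open SimpleGraph

variable {V : Type*}

/-! Without branch vertices, the edges of `T` inside a block form a forest of maximum degree two,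
whose components are paths partitioning the block; so `ham` of the block is at most the number of
components. In each component, the vertex nearest to `r` cannot have its parent inside the block,
since the parent is adjacent to it and strictly nearer to `r`: this injects the components into the
vertices whose parent leaves the block. -/

namespace SimpleGraph

variable {α : Type*}

theorem card_connectedComponent_le_ncard_of_exists_adj_lt [Finite α] {K : SimpleGraph α}
    (h : α → ℕ) (E : Set α) (hE : ∀ v ∉ E, ∃ u, K.Adj u v ∧ h u < h v) :
    Nat.card K.ConnectedComponent ≤ E.ncard := by
  have hentry : ∀ C : K.ConnectedComponent, ∃ v ∈ C.supp, v ∈ E := by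
    intro C
    obtain ⟨v, hv, hmin⟩ := C.supp.exists_min_image h C.supp.toFinite C.nonempty_supp
    refine ⟨v, hv, by_contra fun hvE => ?_⟩
    obtain ⟨u, huv, hlt⟩ := hE v hvE
    exact (hmin u ((C.mem_supp_congr_adj huv).mpr hv)).not_gt hlt
  choose g hgC hgE using hentry
  rw [← Nat.card_coe_set_eq]
  refine Nat.card_le_card_of_injective (fun C => ⟨g C, hgE C⟩) fun C C' hCC' => ?_
  have hg : g C = g C' := congrArg Subtype.val hCC'
  exact ConnectedComponent.eq_of_common_vertex (hgC C) (hg ▸ hgC C')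

variable {G P : SimpleGraph V}

theorem ncard_neighborSet_induce_le [Finite V] (s : Set V) (v : s) :
    ((G.induce s).neighborSet v).ncard ≤ (G.neighborSet v).ncard := by
  rw [neighborSet_induce, ← Set.ncard_image_of_injective _ Subtype.val_injective]
  exact Set.ncard_le_ncard (Set.image_preimage_subset _ _)

theorem isPathSub_induce_supp [Finite V] (hle : P ≤ G) (hac : P.IsAcyclic)
    (hdeg : ∀ v, (P.neighborSet v).ncard ≤ 2) (C : P.ConnectedComponent) :
    IsPathSub ((toSubgraph P hle).induce C.supp) := by
  let e : ((toSubgraph P hle).induce C.supp).coe ≃g C.toSimpleGraph :=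
    ⟨Equiv.refl _, fun {u v} => ⟨fun h => ⟨u.2, v.2, h⟩, fun h => h.2.2⟩⟩
  obtain ⟨hconn, hacyc⟩ := e.isTree_iff.mpr (hac.isTree_connectedComponent C)
  refine ⟨⟨hconn⟩, hacyc, fun v => (Set.ncard_le_ncard ?_).trans (hdeg v)⟩
  exact fun u hu => hu.2.2

theorem hasPathPartition_of_isAcyclic [Finite V] (hle : P ≤ G) (hac : P.IsAcyclic)
    (hdeg : ∀ v, (P.neighborSet v).ncard ≤ 2) :
    HasPathPartition G (Nat.card P.ConnectedComponent) := by
  let e := Finite.equivFin P.ConnectedComponent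
  refine ⟨fun j => (toSubgraph P hle).induce (e.symm j).supp,
    fun j => isPathSub_induce_supp hle hac hdeg _, fun v => ⟨e (P.connectedComponentMk v), ?_, ?_⟩⟩
  · simp
  · intro j hj
    rw [(ConnectedComponent.mem_supp_iff _ _).mp hj, Equiv.apply_symm_apply]

end SimpleGraph

theorem stmt10_general {V : Type*} [Fintype V] (G : SimpleGraph V) (n : ℕ)
    (f : V → Fin n)
    (T : SimpleGraph V) (hT : IsSpanningTree G T)
    (r : V) (hr : r ∈ branchSet T)
    (par : V → V)
    (hpar : ∀ x, x ≠ r → T.Adj (par x) x ∧ T.dist (par x) r + 1 = T.dist x r)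
    (i : Fin n) (hi : branchSet T ∩ f ⁻¹' {i} = ∅) :
    (T.induce (f ⁻¹' {i})).IsAcyclic ∧
    (∀ v : (f ⁻¹' {i} : Set V), ((T.induce (f ⁻¹' {i})).neighborSet v).ncard ≤ 2) ∧
    hamNum (G.induce (f ⁻¹' {i})) ≤ {v | f v = i ∧ f (par v) ≠ i}.ncard := by
  set S := f ⁻¹' {i}
  have hS : ∀ v ∈ S, v ∉ branchSet T := fun v hv hvB => hi.subset ⟨hvB, hv⟩
  have hacyc : (T.induce S).IsAcyclic := hT.2.isAcyclic.induce S
  have hdeg : ∀ v : S, ((T.induce S).neighborSet v).ncard ≤ 2 := fun v =>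
    (T.ncard_neighborSet_induce_le S v).trans (Nat.le_of_lt_succ (not_le.mp (hS v v.2)))
  refine ⟨hacyc, hdeg, ?_⟩
  have hdescent : ∀ v ∉ {v : S | f (par v) ≠ i},
      ∃ u, (T.induce S).Adj u v ∧ T.dist u r < T.dist v r := by
    intro v hv
    have hparS : par v ∈ S := not_not.mp hv
    have hvr : (v : V) ≠ r := fun hvr => hS v v.2 (hvr ▸ hr)
    obtain ⟨hadj, hdist⟩ := hpar v hvr
    exact ⟨⟨par v, hparS⟩, hadj, show T.dist (par v) r < T.dist v r by omega⟩
  calc hamNum (G.induce S) ≤ Nat.card (T.induce S).ConnectedComponent :=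
        Nat.sInf_le (hasPathPartition_of_isAcyclic (fun _ _ h => hT.1 h) hacyc hdeg)
    _ ≤ {v : S | f (par v) ≠ i}.ncard :=
        card_connectedComponent_le_ncard_of_exists_adj_lt (fun v : S => T.dist v r) _ hdescent
    _ = {v | f v = i ∧ f (par v) ≠ i}.ncard := by
        rw [← Set.ncard_image_of_injective _ Subtype.val_injective]
        congr 1
        ext v
        simp [S, and_comm]

theorem stmt10 {V : Type*} [Fintype V] (G : SimpleGraph V) (hG : G.Connected) (n : ℕ)
    (H : SimpleGraph (Fin n)) (f : V → Fin n)
    (hmod : ∀ u v, f u ≠ f v → (G.Adj u v ↔ H.Adj (f u) (f v)))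
    (T : SimpleGraph V) (hT : IsSpanningTree G T)
    (hB : ∀ i, (branchSet T ∩ f ⁻¹' {i}).Subsingleton)
    (r : V) (hr : r ∈ branchSet T)
    (par : V → V)
    (hpar : ∀ x, x ≠ r → T.Adj (par x) x ∧ T.dist (par x) r + 1 = T.dist x r)
    (i : Fin n) (hi : branchSet T ∩ f ⁻¹' {i} = ∅) :
    (T.induce (f ⁻¹' {i})).IsAcyclic ∧
    (∀ v : (f ⁻¹' {i} : Set V), ((T.induce (f ⁻¹' {i})).neighborSet v).ncard ≤ 2) ∧
    hamNum (G.induce (f ⁻¹' {i})) ≤ {v | f v = i ∧ f (par v) ≠ i}.ncard :=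
  stmt10_general G n f T hT r hr par hpar i hi
end
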